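/- For the massive Gross–Neveu soliton U_ω with ω ∈ (0,1), the pointwise identity Im(conj(U_ω(x)) U_ω'(x)) = −(1−ω²)²/(1 + ω cosh(2μx))² holds for all x ∈ ℝ, where μ = √(1−ω²). -/

import Mathlib

/-!
Write `U_ω = V / D` with `V(y) = μ (√(1+ω) cosh μy − i √(1−ω) sinh μy)` and the real denominator
`D(y) = 1 + ω cosh 2μy`. Since `D` is real, the quotient rule gives
`Im (conj U · U') = Im (conj V · V') / D²`, and `cosh² − sinh² = 1` makes
`Im (conj V · V') = −μ³ √(1+ω) √(1−ω) = −μ⁴ = −(1−ω²)²`.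
-/

/-- The massive Gross–Neveu line soliton profile. -/
noncomputable def grossNeveuSoliton (ω x : ℝ) : ℂ :=
  (↑(Real.sqrt (1 - ω ^ 2)) : ℂ) *
    ((↑(Real.sqrt (1 + ω) * Real.cosh (Real.sqrt (1 - ω ^ 2) * x)) : ℂ)
      - Complex.I * (↑(Real.sqrt (1 - ω) * Real.sinh (Real.sqrt (1 - ω ^ 2) * x)) : ℂ)) /
    (↑(1 + ω * Real.cosh (2 * Real.sqrt (1 - ω ^ 2) * x)) : ℂ)

open Complex

theorem im_conj_div_ofReal_mul_deriv {V : ℝ → ℂ} {D : ℝ → ℝ} {V' : ℂ} {D' x : ℝ}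
    (hV : HasDerivAt V V' x) (hD : HasDerivAt D D' x) (hD0 : D x ≠ 0) :
    (starRingEnd ℂ (V x / D x) * deriv (fun y => V y / D y) x).im
      = (starRingEnd ℂ (V x) * V').im / D x ^ 2 := by
  have hD0' : (D x : ℂ) ≠ 0 := ofReal_ne_zero.mpr hD0
  have hquot : HasDerivAt (fun y => V y / D y) ((V' * D x - V x * D') / (D x) ^ 2) x :=
    hV.div hD.ofReal_comp hD0'
  rw [hquot.deriv]
  -- the `V x * D'` part of the quotient rule contributes `|V x|² D'`, which is real
  have hsplit : starRingEnd ℂ (V x / D x) * ((V' * D x - V x * D') / (D x) ^ 2)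
      = starRingEnd ℂ (V x) * V' / ((D x ^ 2 : ℝ) : ℂ) - ((normSq (V x) * D' / D x ^ 3 : ℝ) : ℂ) := by
    push_cast
    rw [map_div₀, conj_ofReal, normSq_eq_conj_mul_self]
    field_simp
  rw [hsplit, sub_im, ofReal_im, sub_zero, div_ofReal_im]

noncomputable def coshSinhProfile (μ a b y : ℝ) : ℂ :=
  μ * ((a * Real.cosh (μ * y) : ℝ) - I * (b * Real.sinh (μ * y) : ℝ))

theorem hasDerivAt_coshSinhProfile (μ a b x : ℝ) :
    HasDerivAt (coshSinhProfile μ a b)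
      (μ * ((a * (Real.sinh (μ * x) * μ) : ℝ) - I * (b * (Real.cosh (μ * x) * μ) : ℝ))) x := by
  have hlin : HasDerivAt (fun y => μ * y) μ x := by simpa using (hasDerivAt_id x).const_mul μ
  have hc := hlin.cosh.const_mul a
  have hs := hlin.sinh.const_mul b
  exact (hc.ofReal_comp.sub (hs.ofReal_comp.const_mul I)).const_mul (μ : ℂ)

theorem im_conj_coshSinhProfile_mul (μ a b x : ℝ) :
    (starRingEnd ℂ (coshSinhProfile μ a b x) *
      (μ * ((a * (Real.sinh (μ * x) * μ) : ℝ) - I * (b * (Real.cosh (μ * x) * μ) : ℝ)))).im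
      = -(μ ^ 3 * a * b) := by
  simp only [coshSinhProfile, map_mul, map_sub, conj_ofReal, conj_I, mul_im, mul_re, sub_re,
    sub_im, ofReal_re, ofReal_im, I_re, I_im, neg_re, neg_im]
  linear_combination (-(μ ^ 3 * a * b)) * Real.cosh_sq_sub_sinh_sq (μ * x)

theorem grossNeveuSoliton_eq_div (ω : ℝ) :
    grossNeveuSoliton ω = fun y =>
      coshSinhProfile (Real.sqrt (1 - ω ^ 2)) (Real.sqrt (1 + ω)) (Real.sqrt (1 - ω)) y /
        ((1 + ω * Real.cosh (2 * Real.sqrt (1 - ω ^ 2) * y) : ℝ) : ℂ) :=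
  rfl

/-- Pointwise identity Im(conj(U_ω) U_ω') = −(1−ω²)²/(1+ω cosh(2μx))², μ = √(1−ω²). -/
theorem grossNeveuSoliton_im_identity (ω : ℝ) (hω : ω ∈ Set.Ioo (0 : ℝ) 1) (x : ℝ) :
    ((starRingEnd ℂ) (grossNeveuSoliton ω x) * deriv (grossNeveuSoliton ω) x).im
      = -((1 - ω ^ 2) ^ 2 / (1 + ω * Real.cosh (2 * Real.sqrt (1 - ω ^ 2) * x)) ^ 2) := by
  obtain ⟨hω0, hω1⟩ := hω
  rw [grossNeveuSoliton_eq_div]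
  set μ := Real.sqrt (1 - ω ^ 2) with hμ
  have hμsq : μ ^ 2 = 1 - ω ^ 2 := Real.sq_sqrt (by nlinarith)
  have hab : Real.sqrt (1 + ω) * Real.sqrt (1 - ω) = μ := by
    rw [hμ, ← Real.sqrt_mul (by linarith)]
    ring_nf
  have hD := ((((hasDerivAt_id' x).const_mul (2 * μ)).cosh).const_mul ω).const_add 1
  have hD0 : 1 + ω * Real.cosh (2 * μ * x) ≠ 0 := by
    nlinarith [Real.one_le_cosh (2 * μ * x)]
  rw [im_conj_div_ofReal_mul_deriv
    (hasDerivAt_coshSinhProfile μ (Real.sqrt (1 + ω)) (Real.sqrt (1 - ω)) x) hD hD0,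
    im_conj_coshSinhProfile_mul, mul_assoc, hab, ← hμsq]
  ring
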